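/- arXiv:2101.01323 — 3 statements merged into one kernel-verified Lean document; each statement's English description precedes it below -/
import Mathlib

section
/- Let H be a symmetric d×d real matrix, i ∈ {1,...,d}, and α ≥ 0 with α·|H_{ii}| < 1. Then the operator norm of the inverse of A = I − α e_i e_iᵀ H satisfies ‖A⁻¹‖ ≤ 1 + α‖H‖/(1 − α|H_{ii}|). -/
/-! `M := e_i e_iᵀ H` satisfies `M² = H_ii M`, so `I - αM` has the explicit inverse
`I + α / (1 - α H_ii) • M` of Sherman–Morrison type. Since `e_i e_iᵀ` is an orthogonal projection,
`‖M‖ ≤ ‖H‖`, and `1 - α H_ii ≥ 1 - α |H_ii| > 0` bounds the coefficient. -/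

open Matrix
open scoped Matrix.Norms.L2Operator

namespace Matrix

variable {n : Type*} [Fintype n] [DecidableEq n]

theorem single_one_mul_mul_self {R : Type*} [Semiring R] (i : n) (H : Matrix n n R) :
    single i i 1 * H * (single i i 1 * H) = H i i • (single i i 1 * H) := by
  rw [← Matrix.mul_assoc, single_mul_mul_single, one_mul, mul_one, ← Matrix.smul_mul, smul_single,
    smul_eq_mul, mul_one]

theorem inv_one_sub_smul_of_mul_self_eq_smul {K : Type*} [Field K] {M : Matrix n n K} {t : K}
    (hM : M * M = t • M) (a : K) (ha : 1 - a * t ≠ 0) :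
    (1 - a • M)⁻¹ = 1 + (a / (1 - a * t)) • M := by
  refine inv_eq_right_inv ?_
  have hcoef : a / (1 - a * t) - a - a * (a / (1 - a * t)) * t = 0 := by
    field_simp
    ring
  calc (1 - a • M) * (1 + (a / (1 - a * t)) • M)
      = 1 + (a / (1 - a * t) - a - a * (a / (1 - a * t)) * t) • M := by
        simp only [sub_mul, mul_add, one_mul, mul_one, smul_mul_smul_comm, hM, smul_smul,
          sub_smul]
        abel
    _ = 1 := by rw [hcoef, zero_smul, add_zero]

theorem isStarProjection_single_one {𝕜 : Type*} [RCLike 𝕜] (i : n) :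
    IsStarProjection (single i i (1 : 𝕜)) where
  isIdempotentElem := by simp [IsIdempotentElem]
  isSelfAdjoint := by simp [IsSelfAdjoint, star_eq_conjTranspose, conjTranspose_single]

theorem l2_opNorm_single_one_mul_le {𝕜 : Type*} [RCLike 𝕜] (i : n) (H : Matrix n n 𝕜) :
    ‖single i i 1 * H‖ ≤ ‖H‖ :=
  calc ‖single i i 1 * H‖ ≤ ‖single i i (1 : 𝕜)‖ * ‖H‖ := l2_opNorm_mul _ _
    _ ≤ 1 * ‖H‖ := by gcongr; exact (isStarProjection_single_one i).norm_le
    _ = ‖H‖ := one_mul _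

end Matrix

theorem stmt_1_general {d : ℕ} (H : Matrix (Fin d) (Fin d) ℝ)
    (i : Fin d) (α : ℝ) (hα0 : 0 ≤ α) (hα : α * |H i i| < 1) :
    ‖((1 : Matrix (Fin d) (Fin d) ℝ) - α • (Matrix.single i i 1 * H))⁻¹‖ ≤
      1 + α * ‖H‖ / (1 - α * |H i i|) := by
  have : Nonempty (Fin d) := ⟨i⟩
  have hα_le : α * H i i ≤ α * |H i i| := mul_le_mul_of_nonneg_left (le_abs_self _) hα0
  have hpos : 0 < 1 - α * H i i := by linarith
  rw [inv_one_sub_smul_of_mul_self_eq_smul (single_one_mul_mul_self i H) α hpos.ne']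
  calc ‖1 + (α / (1 - α * H i i)) • (single i i 1 * H)‖
      ≤ 1 + α / (1 - α * H i i) * ‖single i i 1 * H‖ := by
        grw [norm_add_le, norm_one, norm_smul, Real.norm_of_nonneg (by positivity)]
    _ ≤ 1 + α * ‖H‖ / (1 - α * |H i i|) := by
        rw [div_mul_eq_mul_div]
        gcongr
        exact l2_opNorm_single_one_mul_le i H

theorem stmt_1 {d : ℕ} (H : Matrix (Fin d) (Fin d) ℝ) (hH : H.IsSymm)
    (i : Fin d) (α : ℝ) (hα0 : 0 ≤ α) (hα : α * |H i i| < 1) :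
    ‖((1 : Matrix (Fin d) (Fin d) ℝ) - α • (Matrix.single i i 1 * H))⁻¹‖ ≤
      1 + α * ‖H‖ / (1 - α * |H i i|) :=
  stmt_1_general H i α hα0 hα
end

section
/- Let H be a symmetric d×d matrix, let m ≥ d, let stepsizes α_0,...,α_{m−1} ∈ [α_min, α_max] with 0 < α_min ≤ α_max, and let coordinates i_0,...,i_{m−1} ∈ {1,...,d} be such that {i_0,...,i_{m−1}} = {1,...,d}. Let 0 < δ ≤ min{ 1/(2m), α_min σ_min(H) / (2√m (m α_max σ_max(H) + 1)) }, where σ_min(H) and σ_max(H) are the smallest and largest positive singular values of H. If 0 ≠ y_0 ∈ range(H) and y_{t+1} = y_t − α_t e_{i_t} e_{i_t}ᵀ H y_t for t = 0,...,m−1, then there exists T ∈ {0,...,m−1} such that α_T |e_{i_T}ᵀ H y_T| ≥ δ ‖y_T‖. -/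
/-! Suppose every step were short: α_t |(H y_t)_{i_t}| < δ ‖y_t‖ for all t < m. Then each iterate
moves by less than δ ‖y_t‖, so with 2mδ ≤ 1 all iterates stay within 2mδ ‖y_0‖ ≤ ‖y_0‖ of `y_0`.
Each coordinate `j` is updated at some time `t`, where
|(H y_0)_j| ≤ |(H y_t)_j| + σ_max ‖y_t - y_0‖ < (2δ/α_min + 2mδσ_max) ‖y_0‖,
so ‖H y_0‖ < √m (2δ/α_min + 2mδσ_max) ‖y_0‖ ≤ σ_min ‖y_0‖ by the choice of δ. But `y_0` lies in
the range of `H`, which is spanned by the eigenvectors with nonzero eigenvalue, so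
‖H y_0‖ ≥ σ_min ‖y_0‖.
-/

open Matrix

/-- The Euclidean norm of a vector in `Fin d → ℝ`. -/
noncomputable def eNorm {d : ℕ} (v : Fin d → ℝ) : ℝ := Real.sqrt (∑ j, v j ^ 2)

open WithLp

lemma eNorm_eq_norm_toLp {d : ℕ} (v : Fin d → ℝ) : eNorm v = ‖toLp 2 v‖ := by
  simp [eNorm, EuclideanSpace.norm_eq]

lemma abs_apply_le_eNorm {d : ℕ} (v : Fin d → ℝ) (j : Fin d) : |v j| ≤ eNorm v := by
  simpa [eNorm_eq_norm_toLp] using PiLp.norm_apply_le (toLp 2 v) j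

lemma eNorm_lt_sqrt_mul_of_forall_abs_lt {d : ℕ} [NeZero d] {v : Fin d → ℝ} {c : ℝ}
    (h : ∀ j, |v j| < c) : eNorm v < √d * c := by
  have hc : 0 < c := (abs_nonneg _).trans_lt (h 0)
  rw [eNorm, ← Real.sqrt_sq hc.le, ← Real.sqrt_mul (Nat.cast_nonneg d)]
  refine Real.sqrt_lt_sqrt (by positivity) ?_
  calc ∑ j, v j ^ 2 < ∑ _j : Fin d, c ^ 2 :=
        Finset.sum_lt_sum_of_nonempty Finset.univ_nonempty fun j _ =>
          sq_abs (v j) ▸ pow_lt_pow_left₀ (h j) (abs_nonneg _) two_ne_zero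
    _ = d * c ^ 2 := by simp

lemma one_sub_smul_single_mul_mulVec {d : ℕ} (H : Matrix (Fin d) (Fin d) ℝ) (a : ℝ) (k : Fin d)
    (v : Fin d → ℝ) :
    (1 - a • (single k k 1 * H)) *ᵥ v = v - Pi.single k (a * (H *ᵥ v) k) := by
  rw [sub_mulVec, one_mulVec, smul_mulVec, ← mulVec_mulVec, single_mulVec_eq]
  ext j
  by_cases h : j = k <;> simp [h]

lemma eNorm_one_sub_smul_single_mul_mulVec_sub {d : ℕ} (H : Matrix (Fin d) (Fin d) ℝ) (a : ℝ)
    (k : Fin d) (v : Fin d → ℝ) :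
    eNorm ((1 - a • (single k k 1 * H)) *ᵥ v - v) = |a| * |(H *ᵥ v) k| := by
  rw [one_sub_smul_single_mul_mulVec, sub_sub_cancel_left, eNorm_eq_norm_toLp, toLp_neg,
    norm_neg, PiLp.toLp_single, PiLp.norm_single, Real.norm_eq_abs, abs_mul]

lemma norm_sub_apply_zero_le_of_norm_step_le {E : Type*} [SeminormedAddCommGroup E] {x : ℕ → E}
    {m : ℕ} {δ : ℝ} (hδ : 0 ≤ δ) (hmδ : 2 * m * δ ≤ 1)
    (hstep : ∀ t < m, ‖x (t + 1) - x t‖ ≤ δ * ‖x t‖) :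
    ∀ t ≤ m, ‖x t - x 0‖ ≤ 2 * t * δ * ‖x 0‖ := by
  intro t
  induction t with
  | zero => simp
  | succ t ih =>
    intro ht
    have hdev := ih (by omega)
    have htm : 2 * t * δ ≤ 1 := le_trans (by gcongr; exact_mod_cast (by omega : t ≤ m)) hmδ
    have hxt : ‖x t‖ ≤ 2 * ‖x 0‖ := by
      nlinarith [norm_le_norm_add_norm_sub' (x t) (x 0), norm_nonneg (x 0)]
    calc ‖x (t + 1) - x 0‖ ≤ ‖x (t + 1) - x t‖ + ‖x t - x 0‖ :=
          norm_sub_le_norm_sub_add_norm_sub _ _ _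
      _ ≤ δ * (2 * ‖x 0‖) + 2 * t * δ * ‖x 0‖ := by
        gcongr
        exact (hstep t (by omega)).trans (by gcongr)
      _ = 2 * ↑(t + 1) * δ * ‖x 0‖ := by push_cast; ring

lemma OrthonormalBasis.mul_norm_le_mul_norm_of_abs_repr {ι E : Type*} [Fintype ι]
    [NormedAddCommGroup E] [InnerProductSpace ℝ E] (b : OrthonormalBasis ι ℝ E) {u v : E}
    {a c : ℝ} (ha : 0 ≤ a) (hc : 0 ≤ c) (h : ∀ j, a * |b.repr u j| ≤ c * |b.repr v j|) :
    a * ‖u‖ ≤ c * ‖v‖ := by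
  rw [← b.repr.norm_map u, ← b.repr.norm_map v,
    ← pow_le_pow_iff_left₀ (by positivity) (by positivity) two_ne_zero, mul_pow, mul_pow,
    EuclideanSpace.norm_sq_eq, EuclideanSpace.norm_sq_eq, Finset.mul_sum, Finset.mul_sum]
  refine Finset.sum_le_sum fun j _ => ?_
  simpa only [Real.norm_eq_abs, mul_pow] using pow_le_pow_left₀ (by positivity) (h j) 2

lemma Matrix.IsHermitian.eigenvectorBasis_repr_mulVec {n : Type*} [Fintype n] [DecidableEq n]
    {H : Matrix n n ℝ} (hH : H.IsHermitian) (v : n → ℝ) (j : n) :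
    hH.eigenvectorBasis.repr (toLp 2 (H *ᵥ v)) j =
      hH.eigenvalues j * hH.eigenvectorBasis.repr (toLp 2 v) j := by
  have hsymm := (isSymmetric_toEuclideanLin_iff.mpr hH) (hH.eigenvectorBasis j) (toLp 2 v)
  rw [toEuclideanLin, toLpLin_apply, toLpLin_apply, hH.mulVec_eigenvectorBasis] at hsymm
  simp only [OrthonormalBasis.repr_apply_apply]
  rw [← hsymm, toLp_smul, toLp_ofLp, real_inner_smul_left]

lemma Matrix.IsHermitian.eNorm_mulVec_le {d : ℕ} {H : Matrix (Fin d) (Fin d) ℝ}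
    (hH : H.IsHermitian) {c : ℝ} (hc : 0 ≤ c)
    (h : ∀ j, |hH.eigenvalues j| ≤ c) (v : Fin d → ℝ) : eNorm (H *ᵥ v) ≤ c * eNorm v := by
  simpa only [eNorm_eq_norm_toLp, one_mul] using
    hH.eigenvectorBasis.mul_norm_le_mul_norm_of_abs_repr zero_le_one hc fun j => by
      rw [hH.eigenvectorBasis_repr_mulVec, abs_mul, one_mul]
      exact mul_le_mul_of_nonneg_right (h j) (abs_nonneg _)

lemma Matrix.IsHermitian.mul_eNorm_le_eNorm_mulVec_of_mem_range {d : ℕ}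
    {H : Matrix (Fin d) (Fin d) ℝ} (hH : H.IsHermitian) {c : ℝ} (hc : 0 ≤ c)
    (h : ∀ j, hH.eigenvalues j ≠ 0 → c ≤ |hH.eigenvalues j|) {v : Fin d → ℝ}
    (hv : ∃ z, v = H *ᵥ z) : c * eNorm v ≤ eNorm (H *ᵥ v) := by
  obtain ⟨z, rfl⟩ := hv
  simpa only [eNorm_eq_norm_toLp, one_mul] using
    hH.eigenvectorBasis.mul_norm_le_mul_norm_of_abs_repr hc zero_le_one fun j => by
      simp only [hH.eigenvectorBasis_repr_mulVec, abs_mul, one_mul]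
      rcases eq_or_ne (hH.eigenvalues j) 0 with h0 | h0
      · simp [h0]
      · rw [← mul_assoc, ← mul_assoc]
        exact mul_le_mul_of_nonneg_right (mul_le_mul_of_nonneg_right (h j h0) (abs_nonneg _))
          (abs_nonneg _)

lemma abs_le_of_isGreatest_abs_pos {ι : Type*} {f : ι → ℝ} {s : ℝ}
    (h : IsGreatest {s : ℝ | 0 < s ∧ ∃ j, |f j| = s} s) (j : ι) : |f j| ≤ s := by
  rcases eq_or_ne (f j) 0 with h0 | h0
  · simpa [h0] using h.1.1.le
  · exact h.2 ⟨abs_pos.2 h0, j, rfl⟩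

lemma abs_mulVec_apply_lt_of_forall_step_lt {d m : ℕ} {H : Matrix (Fin d) (Fin d) ℝ}
    (hH : H.IsHermitian) {σmax αmin δ : ℝ} (hσmax : 0 ≤ σmax)
    (heig : ∀ j, |hH.eigenvalues j| ≤ σmax) (hαmin : 0 < αmin) {α : ℕ → ℝ}
    (hα : ∀ t < m, αmin ≤ α t) {i : ℕ → Fin d} (hδ0 : 0 ≤ δ) (hmδ : 2 * m * δ ≤ 1)
    {y : ℕ → Fin d → ℝ}
    (hrec : ∀ t < m, y (t + 1) = (1 - α t • (single (i t) (i t) 1 * H)) *ᵥ y t)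
    (hsmall : ∀ t < m, α t * |(H *ᵥ y t) (i t)| < δ * eNorm (y t)) {t : ℕ} (ht : t < m) :
    |(H *ᵥ y 0) (i t)| < (2 * δ / αmin + 2 * m * δ * σmax) * eNorm (y 0) := by
  set x : ℕ → EuclideanSpace ℝ (Fin d) := fun s => toLp 2 (y s)
  have hnorm (s : ℕ) : eNorm (y s) = ‖x s‖ := eNorm_eq_norm_toLp (y s)
  have hstep : ∀ s < m, ‖x (s + 1) - x s‖ ≤ δ * ‖x s‖ := by
    intro s hs
    rw [← hnorm, ← toLp_sub, ← eNorm_eq_norm_toLp, hrec s hs,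
      eNorm_one_sub_smul_single_mul_mulVec_sub, abs_of_pos (hαmin.trans_le (hα s hs))]
    exact (hsmall s hs).le
  have hdrift : ‖x t - x 0‖ ≤ 2 * m * δ * ‖x 0‖ :=
    (norm_sub_apply_zero_le_of_norm_step_le hδ0 hmδ hstep t ht.le).trans (by gcongr)
  have hyt : ‖x t‖ ≤ 2 * ‖x 0‖ := by
    nlinarith [norm_le_norm_add_norm_sub' (x t) (x 0), norm_nonneg (x 0)]
  simp only [hnorm] at hsmall ⊢
  have hfar : |(H *ᵥ (y t - y 0)) (i t)| ≤ 2 * m * δ * σmax * ‖x 0‖ := by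
    calc |(H *ᵥ (y t - y 0)) (i t)| ≤ σmax * eNorm (y t - y 0) :=
          (abs_apply_le_eNorm _ _).trans (hH.eNorm_mulVec_le hσmax heig _)
      _ ≤ σmax * (2 * m * δ * ‖x 0‖) := by rw [eNorm_eq_norm_toLp, toLp_sub]; gcongr
      _ = 2 * m * δ * σmax * ‖x 0‖ := by ring
  have hnear : |(H *ᵥ y t) (i t)| < 2 * δ / αmin * ‖x 0‖ := by
    rw [div_mul_eq_mul_div, lt_div_iff₀ hαmin]
    calc |(H *ᵥ y t) (i t)| * αmin ≤ α t * |(H *ᵥ y t) (i t)| := by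
          rw [mul_comm]; gcongr; exact hα t ht
      _ < δ * ‖x t‖ := hsmall t ht
      _ ≤ 2 * δ * ‖x 0‖ := by nlinarith
  calc |(H *ᵥ y 0) (i t)| = |(H *ᵥ y t) (i t) - (H *ᵥ (y t - y 0)) (i t)| := by
        rw [mulVec_sub, Pi.sub_apply, sub_sub_cancel]
    _ ≤ |(H *ᵥ y t) (i t)| + |(H *ᵥ (y t - y 0)) (i t)| := abs_sub _ _
    _ < (2 * δ / αmin + 2 * m * δ * σmax) * ‖x 0‖ := by linarith

lemma sqrt_mul_add_le_of_le_div {m : ℕ} (hm : 0 < m) {αmin αmax σmin σmax δ : ℝ}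
    (hαmin : 0 < αmin) (hαle : αmin ≤ αmax) (hσmax : 0 ≤ σmax) (hδ0 : 0 ≤ δ)
    (hδ : δ ≤ αmin * σmin / (2 * √m * (m * αmax * σmax + 1))) :
    √m * (2 * δ / αmin + 2 * m * δ * σmax) ≤ σmin := by
  have hsqrt : 0 < √(m : ℝ) := Real.sqrt_pos.2 (by exact_mod_cast hm)
  have hαmax : 0 < αmax := hαmin.trans_le hαle
  rw [le_div_iff₀ (by positivity)] at hδ
  calc √m * (2 * δ / αmin + 2 * m * δ * σmax)
      = 2 * √m * δ * (m * αmin * σmax + 1) / αmin := by field_simp; ring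
    _ ≤ 2 * √m * δ * (m * αmax * σmax + 1) / αmin := by gcongr
    _ ≤ αmin * σmin / αmin := div_le_div_of_nonneg_right (by linarith) hαmin.le
    _ = σmin := by field_simp

theorem stmt_3 {d m : ℕ} (hm : d ≤ m)
    (H : Matrix (Fin d) (Fin d) ℝ) (hH : H.IsHermitian)
    (σmin σmax : ℝ)
    (hσmin : IsLeast {s : ℝ | 0 < s ∧ ∃ j, |hH.eigenvalues j| = s} σmin)
    (hσmax : IsGreatest {s : ℝ | 0 < s ∧ ∃ j, |hH.eigenvalues j| = s} σmax)
    (αmin αmax : ℝ) (hαmin : 0 < αmin) (hαle : αmin ≤ αmax)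
    (α : ℕ → ℝ) (hα : ∀ t, t < m → α t ∈ Set.Icc αmin αmax)
    (i : ℕ → Fin d) (hcover : ∀ j : Fin d, ∃ t, t < m ∧ i t = j)
    (δ : ℝ) (hδ0 : 0 < δ)
    (hδ : δ ≤ min (1 / (2 * (m : ℝ)))
      (αmin * σmin / (2 * Real.sqrt m * (m * αmax * σmax + 1))))
    (y : ℕ → Fin d → ℝ) (hy0ne : y 0 ≠ 0) (hy0ran : ∃ z, y 0 = H *ᵥ z)
    (hrec : ∀ t, t < m →
      y (t + 1) = ((1 : Matrix (Fin d) (Fin d) ℝ)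
        - α t • (Matrix.single (i t) (i t) 1 * H)) *ᵥ y t) :
    ∃ T, T < m ∧ δ * eNorm (y T) ≤ α T * |(H *ᵥ y T) (i T)| := by
  by_contra! hsmall
  have : NeZero d := ⟨by rintro rfl; exact hy0ne (Subsingleton.elim _ _)⟩
  have hm0 : 0 < m := (Nat.pos_of_neZero d).trans_le hm
  have hσmax0 : 0 ≤ σmax := hσmax.1.1.le
  have hmδ : 2 * m * δ ≤ 1 := by
    have := hδ.trans (min_le_left _ _)
    rwa [le_div_iff₀ (by positivity), mul_comm] at this
  have hcoord (j : Fin d) :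
      |(H *ᵥ y 0) j| < (2 * δ / αmin + 2 * m * δ * σmax) * eNorm (y 0) := by
    obtain ⟨t, ht, rfl⟩ := hcover j
    exact abs_mulVec_apply_lt_of_forall_step_lt hH hσmax0 (abs_le_of_isGreatest_abs_pos hσmax)
      hαmin (fun t ht => (hα t ht).1) hδ0.le hmδ hrec hsmall ht
  have hN : 0 ≤ eNorm (y 0) := Real.sqrt_nonneg _
  have hlower : σmin * eNorm (y 0) ≤ eNorm (H *ᵥ y 0) :=
    hH.mul_eNorm_le_eNorm_mulVec_of_mem_range hσmin.1.1.le
      (fun j hj => hσmin.2 ⟨abs_pos.2 hj, j, rfl⟩) hy0ran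
  have hupper : eNorm (H *ᵥ y 0) < √m * (2 * δ / αmin + 2 * m * δ * σmax) * eNorm (y 0) := by
    rw [mul_assoc]
    refine (eNorm_lt_sqrt_mul_of_forall_abs_lt hcoord).trans_le ?_
    gcongr
  have harith := sqrt_mul_add_le_of_le_div hm0 hαmin hαle hσmax0 hδ0.le
    (hδ.trans (min_le_right _ _))
  linarith [mul_le_mul_of_nonneg_right harith hN]
end

section
/- Let H be symmetric d×d with λ_min(H) < 0, m ≥ d, and 0 < α_min ≤ α_max with α_max|H_{jj}| < 1 for all j. Consider blocks of m steps of the linear iteration x_{t+1} = (I − α_t e_{i_t} e_{i_t}ᵀ H)x_t with i.i.d. uniform coordinates. If x₀ satisfies f^H(x₀) < 0, and I_k is the indicator that block k covers all coordinates (i.e. {i_{km},...,i_{km+m−1}} = {1,...,d}), then f^H(x_{km}) ≤ (1+c)^{Σ_{j<k} I_j} f^H(x₀), and hence, since f^H is never increasing along the iteration, ‖x_{km}‖² ≥ (2/|λ_min(H)|)·|f^H(x₀)|·(1+c)^{Σ_{j<k} I_j}, where c ∈ (0,1) is the constant from the per-block decay estimate. -/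
/-!
A coordinate step `x ↦ x - α (Hx)ⱼ eⱼ` changes `xᵀHx` by `-α (Hx)ⱼ² (2 - α Hⱼⱼ) ≤ 0`, so
`f^H` never increases along the iteration. Hence blocks that miss a coordinate do not raise
`f^H`, while each covering block multiplies the negative value `f^H` by at least `1 + c`.
Finally `λ_min ‖x‖² ≤ xᵀHx` with `λ_min < 0` turns the upper bound on `f^H(x_{km})` into a
lower bound on `‖x_{km}‖²`.
-/

open Matrix

namespace Matrix

variable {ι : Type*} [Fintype ι] [DecidableEq ι] {H : Matrix ι ι ℝ}

theorem IsHermitian.mul_dotProduct_self_le (hH : H.IsHermitian) {μ : ℝ}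
    (hμ : ∀ j, μ ≤ hH.eigenvalues j) (x : ι → ℝ) :
    μ * (x ⬝ᵥ x) ≤ x ⬝ᵥ (H *ᵥ x) := by
  set U : Matrix ι ι ℝ := (hH.eigenvectorUnitary : Matrix ι ι ℝ)
  set y := star U *ᵥ x with hy
  have hUU : U * star U = 1 := mem_unitaryGroup_iff.mp hH.eigenvectorUnitary.2
  have hnorm : y ⬝ᵥ y = x ⬝ᵥ x := by
    rw [hy, dotProduct_mulVec, ← mulVec_transpose, ← conjTranspose_eq_transpose_of_trivial,
      ← star_eq_conjTranspose, star_star, mulVec_mulVec, hUU, one_mulVec]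
  have hquad : x ⬝ᵥ (H *ᵥ x) = ∑ j, hH.eigenvalues j * (y j * y j) := by
    conv_lhs => rw [hH.spectral_theorem, Unitary.conjStarAlgAut_apply]
    rw [← mulVec_mulVec, ← mulVec_mulVec, dotProduct_mulVec, ← mulVec_transpose,
      ← conjTranspose_eq_transpose_of_trivial, ← star_eq_conjTranspose, ← hy]
    simp only [dotProduct, mulVec_diagonal, Function.comp_apply, RCLike.ofReal_real_eq_id, id_eq]
    exact Finset.sum_congr rfl fun _ _ => by ring
  rw [hquad, ← hnorm, dotProduct, Finset.mul_sum]
  exact Finset.sum_le_sum fun j _ => mul_le_mul_of_nonneg_right (hμ j) (mul_self_nonneg _)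

theorem one_sub_smul_single_mul_mulVec (a : ℝ) (j : ι) (v : ι → ℝ) :
    (1 - a • (single j j 1 * H)) *ᵥ v = v - (a * (H *ᵥ v) j) • Pi.single j 1 := by
  ext k
  rcases eq_or_ne k j with rfl | hkj
  · simp [sub_mulVec, smul_mulVec, ← mulVec_mulVec, single_mulVec]
  · simp [sub_mulVec, smul_mulVec, ← mulVec_mulVec, single_mulVec, hkj]

theorem IsHermitian.dotProduct_mulVec_sub_smul_single (hH : H.IsHermitian) (v : ι → ℝ)
    (s : ℝ) (j : ι) :
    (v - s • Pi.single j 1) ⬝ᵥ (H *ᵥ (v - s • Pi.single j 1)) =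
      v ⬝ᵥ (H *ᵥ v) - 2 * s * (H *ᵥ v) j + s ^ 2 * H j j := by
  have hT : Hᵀ = H := by rw [← conjTranspose_eq_transpose_of_trivial]; exact hH
  have hcross : v ⬝ᵥ (H *ᵥ Pi.single j 1) = (H *ᵥ v) j := by
    rw [dotProduct_mulVec, ← hT, vecMul_transpose, hT]; simp
  simp only [mulVec_sub, mulVec_smul, dotProduct_sub, sub_dotProduct, dotProduct_smul,
    smul_dotProduct, smul_eq_mul, hcross]
  simp only [single_dotProduct, one_mul, mulVec_single, MulOpposite.op_one, one_smul, col_apply]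
  ring

theorem IsHermitian.dotProduct_mulVec_one_sub_smul_single_mul_le (hH : H.IsHermitian)
    {a : ℝ} (ha : 0 ≤ a) {j : ι} (haj : a * H j j ≤ 2) (v : ι → ℝ) :
    ((1 - a • (single j j 1 * H)) *ᵥ v) ⬝ᵥ (H *ᵥ ((1 - a • (single j j 1 * H)) *ᵥ v)) ≤
      v ⬝ᵥ (H *ᵥ v) := by
  rw [one_sub_smul_single_mul_mulVec, hH.dotProduct_mulVec_sub_smul_single]
  have : 0 ≤ a * (H *ᵥ v) j ^ 2 * (2 - a * H j j) :=
    mul_nonneg (mul_nonneg ha (sq_nonneg _)) (sub_nonneg.2 haj)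
  linarith

end Matrix

theorem Antitone.le_pow_sum_mul_of_block_decay {f : ℕ → ℝ} (hf : Antitone f) (hf0 : f 0 < 0)
    {m : ℕ} {c : ℝ} (hc : 0 < 1 + c) {I : ℕ → ℕ} (hI : ∀ k, I k = 0 ∨ I k = 1)
    (hblock : ∀ k, I k = 1 → f (k * m) < 0 → f (k * m + m) ≤ (1 + c) * f (k * m)) (k : ℕ) :
    f (k * m) ≤ (1 + c) ^ (∑ j ∈ Finset.range k, I j) * f 0 := by
  induction k with
  | zero => simp
  | succ k ih =>
    have hneg : f (k * m) < 0 := ih.trans_lt (mul_neg_of_pos_of_neg (pow_pos hc _) hf0)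
    have hstep : f ((k + 1) * m) ≤ (1 + c) ^ I k * f (k * m) := by
      rw [add_one_mul]
      rcases hI k with h | h
      · simpa [h] using hf (Nat.le_add_right _ _)
      · simpa [h] using hblock k h hneg
    calc f ((k + 1) * m) ≤ (1 + c) ^ I k * f (k * m) := hstep
      _ ≤ (1 + c) ^ I k * ((1 + c) ^ (∑ j ∈ Finset.range k, I j) * f 0) := by gcongr
      _ = (1 + c) ^ (∑ j ∈ Finset.range (k + 1), I j) * f 0 := by
        rw [Finset.sum_range_succ, pow_add]; ring

theorem stmt_19_general {d m : ℕ}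
    (H : Matrix (Fin d) (Fin d) ℝ) (hH : H.IsHermitian)
    (lammin : ℝ) (hlam : IsLeast (Set.range hH.eigenvalues) lammin) (hneg : lammin < 0)
    (αmin αmax : ℝ) (hαmin : 0 < αmin)
    (hdiag : ∀ j, αmax * |H j j| < 1)
    (α : ℕ → ℝ) (hα : ∀ t, α t ∈ Set.Icc αmin αmax) (i : ℕ → Fin d)
    (x : ℕ → Fin d → ℝ)
    (hrec : ∀ t, x (t + 1) = ((1 : Matrix (Fin d) (Fin d) ℝ)
      - α t • (Matrix.single (i t) (i t) 1 * H)) *ᵥ x t)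
    (hx0 : (1 / 2) * (x 0 ⬝ᵥ (H *ᵥ x 0)) < 0)
    (Ind : ℕ → ℕ)
    (hInd : ∀ k, (Ind k = 0 ∨ Ind k = 1) ∧
      (Ind k = 1 ↔ ∀ j : Fin d, ∃ t, t < m ∧ i (k * m + t) = j))
    (c : ℝ) (hc : c ∈ Set.Ioo (0 : ℝ) 1)
    -- the per-block decay estimate with constant `c`
    (hblock : ∀ t, (1 / 2) * (x t ⬝ᵥ (H *ᵥ x t)) < 0 →
      (∀ j : Fin d, ∃ s, s < m ∧ i (t + s) = j) →
      (1 / 2) * (x (t + m) ⬝ᵥ (H *ᵥ x (t + m))) ≤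
        (1 + c) * ((1 / 2) * (x t ⬝ᵥ (H *ᵥ x t)))) :
    ∀ k : ℕ,
      (1 / 2) * (x (k * m) ⬝ᵥ (H *ᵥ x (k * m))) ≤
        (1 + c) ^ (∑ j ∈ Finset.range k, Ind j) * ((1 / 2) * (x 0 ⬝ᵥ (H *ᵥ x 0))) ∧
      (2 / |lammin|) * |(1 / 2) * (x 0 ⬝ᵥ (H *ᵥ x 0))| *
          (1 + c) ^ (∑ j ∈ Finset.range k, Ind j) ≤ ∑ j, (x (k * m)) j ^ 2 := by
  have hf : Antitone fun t ↦ (1 / 2) * (x t ⬝ᵥ (H *ᵥ x t)) := by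
    refine antitone_nat_of_succ_le fun t ↦ ?_
    have hαt : 0 ≤ α t := hαmin.le.trans (hα t).1
    have hαH : α t * H (i t) (i t) ≤ 2 := calc
      α t * H (i t) (i t) ≤ α t * |H (i t) (i t)| := mul_le_mul_of_nonneg_left (le_abs_self _) hαt
      _ ≤ αmax * |H (i t) (i t)| := mul_le_mul_of_nonneg_right (hα t).2 (abs_nonneg _)
      _ ≤ 2 := by linarith [hdiag (i t)]
    have hdec := hH.dotProduct_mulVec_one_sub_smul_single_mul_le hαt hαH (x t)
    rw [← hrec] at hdec
    linarith
  intro k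
  have hdecay := hf.le_pow_sum_mul_of_block_decay hx0 (by linarith [hc.1]) (fun k ↦ (hInd k).1)
    (fun k hk hfk ↦ hblock _ hfk ((hInd k).2.1 hk)) k
  refine ⟨hdecay, ?_⟩
  have hlow := hH.mul_dotProduct_self_le (fun j ↦ hlam.2 ⟨j, rfl⟩) (x (k * m))
  rw [show x (k * m) ⬝ᵥ x (k * m) = ∑ j, x (k * m) j ^ 2 by simp [dotProduct, sq]] at hlow
  rw [abs_of_neg hneg, abs_of_neg hx0, div_mul_eq_mul_div, div_mul_eq_mul_div,
    div_le_iff₀ (neg_pos.2 hneg)]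
  nlinarith

theorem stmt_19 {d m : ℕ} (hm : d ≤ m)
    (H : Matrix (Fin d) (Fin d) ℝ) (hH : H.IsHermitian)
    (lammin : ℝ) (hlam : IsLeast (Set.range hH.eigenvalues) lammin) (hneg : lammin < 0)
    (αmin αmax : ℝ) (hαmin : 0 < αmin) (hαle : αmin ≤ αmax)
    (hdiag : ∀ j, αmax * |H j j| < 1)
    (α : ℕ → ℝ) (hα : ∀ t, α t ∈ Set.Icc αmin αmax) (i : ℕ → Fin d)
    (x : ℕ → Fin d → ℝ)
    (hrec : ∀ t, x (t + 1) = ((1 : Matrix (Fin d) (Fin d) ℝ)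
      - α t • (Matrix.single (i t) (i t) 1 * H)) *ᵥ x t)
    (hx0 : (1 / 2) * (x 0 ⬝ᵥ (H *ᵥ x 0)) < 0)
    (Ind : ℕ → ℕ)
    (hInd : ∀ k, (Ind k = 0 ∨ Ind k = 1) ∧
      (Ind k = 1 ↔ ∀ j : Fin d, ∃ t, t < m ∧ i (k * m + t) = j))
    (c : ℝ) (hc : c ∈ Set.Ioo (0 : ℝ) 1)
    -- the per-block decay estimate with constant `c`
    (hblock : ∀ t, (1 / 2) * (x t ⬝ᵥ (H *ᵥ x t)) < 0 →
      (∀ j : Fin d, ∃ s, s < m ∧ i (t + s) = j) →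
      (1 / 2) * (x (t + m) ⬝ᵥ (H *ᵥ x (t + m))) ≤
        (1 + c) * ((1 / 2) * (x t ⬝ᵥ (H *ᵥ x t)))) :
    ∀ k : ℕ,
      (1 / 2) * (x (k * m) ⬝ᵥ (H *ᵥ x (k * m))) ≤
        (1 + c) ^ (∑ j ∈ Finset.range k, Ind j) * ((1 / 2) * (x 0 ⬝ᵥ (H *ᵥ x 0))) ∧
      (2 / |lammin|) * |(1 / 2) * (x 0 ⬝ᵥ (H *ᵥ x 0))| *
          (1 + c) ^ (∑ j ∈ Finset.range k, Ind j) ≤ ∑ j, (x (k * m)) j ^ 2 :=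
  stmt_19_general H hH lammin hlam hneg αmin αmax hαmin hdiag α hα i x hrec hx0 Ind hInd c hc hblock
end
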